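/- arXiv:2211.07523 — 3 statements merged into one kernel-verified Lean document; each statement's English description precedes it below -/
import Mathlib

section
/- Let A be a free module over the Novikov ring Λ_{≥0}, equip A with its canonical filtration ρ(a) = sup{r : a ∈ T^r A}, and equip A ⊗ Λ with the induced non-archimedean valuation val_A(a) = -inf{r : T^r a ∈ ι(A)}. Then the natural map from (the completion of A as a Λ_{≥0}-module) tensored with Λ to the completion of A ⊗ Λ as a normed space, Â ⊗ Λ → (A ⊗ Λ)^, is a valuation-preserving isomorphism. -/
/-!
Every element of `Â ⊗ Λ` has the form `ŝ / T^x` with `s` a Cauchy sequence of `A`, and any two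
elements can be brought to a common level `x`. At a common level the distance of `A ⊗ Λ` is `e^x`
times that of `A`, which makes `Φ` injective. A Cauchy sequence `u` of `A ⊗ Λ` eventually lies in a
single lattice `T^{-x} A`: choosing `u_N ∈ T^{-x} A` with `x ≥ 0`, every `u_n` with
`val (u_n - u_N) > 0` differs from `u_N` by an element of `T^{-x} A`. So `u` comes from a Cauchy
sequence of `A`, which gives surjectivity. Finally, by the ultrametric inequality, `ρ` is either
eventually constant or tends to `⊤` along a Cauchy sequence, so both valuations equal
`lim ρ (s_n) - x`.
-/

open scoped NNReal

/-- The pseudodistance `e^{-v(x-y)}` induced by a valuation `v` and a difference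
operation `sub`. -/
noncomputable def vsDist {X : Type*} (v : X → EReal) (sub : X → X → X) (x y : X) : ℝ :=
  if v (sub x y) = ⊤ then 0 else Real.exp (-(v (sub x y)).toReal)

/-- A sequence is Cauchy with respect to a distance function `d`. -/
def IsCauchyWith {X : Type*} (d : X → X → ℝ) (s : ℕ → X) : Prop :=
  ∀ ε : ℝ, 0 < ε → ∃ N : ℕ, ∀ m ≥ N, ∀ n ≥ N, d (s m) (s n) < ε

/-- Two Cauchy sequences are identified when their distance converges to `0`. -/
def NullWith {X : Type*} (d : X → X → ℝ)
    (s t : {s : ℕ → X // IsCauchyWith d s}) : Prop :=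
  Filter.Tendsto (fun n => d (s.1 n) (t.1 n)) Filter.atTop (nhds 0)

/-- The completion with respect to a distance function: Cauchy sequences modulo
null sequences. -/
def CompletionWith {X : Type*} (d : X → X → ℝ) : Type _ :=
  Quot (NullWith d)

/-- The class of a Cauchy sequence in the completion. -/
def CompletionWith.mk {X : Type*} (d : X → X → ℝ)
    (s : {s : ℕ → X // IsCauchyWith d s}) : CompletionWith d :=
  Quot.mk _ s

/-- The base change to the Novikov field, `M ⊗ Λ ≅ (M × ℝ)/∼` with
`(a, s) ∼ (T^r • a, s + r)`, for a space `M` with a rescaling action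
`act r : M → M` by the powers `T^r` of the Novikov parameter. -/
def TensQ (X : Type*) (act : ℝ≥0 → X → X) : Type _ :=
  Quot (fun p q : X × ℝ => ∃ r : ℝ≥0, q.1 = act r p.1 ∧ q.2 = p.2 + (r : ℝ))

/-- The class of a pair `(a, s)`, representing `a/T^s`, in the base change. -/
def TensQ.mk {X : Type*} (act : ℝ≥0 → X → X) (a : X) (s : ℝ) : TensQ X act :=
  Quot.mk _ (a, s)

open Filter Topology

namespace TensQ

variable {X : Type*} {act : ℝ≥0 → X → X}

theorem mk_eq_mk_act (a : X) (s : ℝ) (r : ℝ≥0) : mk act a s = mk act (act r a) (s + r) :=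
  Quot.sound ⟨r, rfl, rfl⟩

theorem mk_eq_mk_of_le (a : X) {s x : ℝ} (h : s ≤ x) :
    mk act a s = mk act (act (x - s).toNNReal a) x := by
  rw [mk_eq_mk_act a s, Real.coe_toNNReal _ (sub_nonneg.2 h), add_sub_cancel]

theorem exists_level (z : TensQ X act) : ∃ s : ℝ, ∀ x ≥ s, ∃ a, z = mk act a x := by
  obtain ⟨⟨a, s⟩, rfl⟩ := Quot.exists_rep z
  exact ⟨s, fun x hx => ⟨_, mk_eq_mk_of_le a hx⟩⟩

theorem exists_eq_mk (z : TensQ X act) : ∃ a x, z = mk act a x :=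
  let ⟨s, hs⟩ := exists_level z
  let ⟨a, ha⟩ := hs s le_rfl
  ⟨a, s, ha⟩

theorem exists_eq_mk_eq_mk (z w : TensQ X act) :
    ∃ a b x, z = mk act a x ∧ w = mk act b x := by
  obtain ⟨s, hs⟩ := exists_level z
  obtain ⟨t, ht⟩ := exists_level w
  obtain ⟨a, rfl⟩ := hs (max s t) (le_max_left _ _)
  obtain ⟨b, rfl⟩ := ht (max s t) (le_max_right _ _)
  exact ⟨a, b, _, rfl, rfl⟩

theorem exists_eq_mk_eq_mk_eq_mk (z v w : TensQ X act) :
    ∃ a b c x, z = mk act a x ∧ v = mk act b x ∧ w = mk act c x := by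
  obtain ⟨s, hs⟩ := exists_level z
  obtain ⟨t, ht⟩ := exists_level v
  obtain ⟨u, hu⟩ := exists_level w
  obtain ⟨a, rfl⟩ := hs (max (max s t) u) ((le_max_left _ _).trans (le_max_left _ _))
  obtain ⟨b, rfl⟩ := ht (max (max s t) u) ((le_max_right _ _).trans (le_max_left _ _))
  obtain ⟨c, rfl⟩ := hu (max (max s t) u) (le_max_right _ _)
  exact ⟨a, b, c, _, rfl, rfl, rfl⟩

end TensQ

section CauchySequences

variable {X Y : Type*} {d : X → X → ℝ}

theorem CompletionWith.mk_surjective : Function.Surjective (CompletionWith.mk d) :=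
  Quot.exists_rep

theorem CompletionWith.mk_eq_mk_iff (hd : Equivalence (NullWith d))
    {s t : {s : ℕ → X // IsCauchyWith d s}} :
    CompletionWith.mk d s = CompletionWith.mk d t ↔ NullWith d s t :=
  ⟨fun h => hd.eqvGen_iff.1 (Quot.eq.1 h), Quot.sound⟩

theorem nullWith_equivalence (hself : ∀ x, d x x = 0) (hcomm : ∀ x y, d x y = d y x)
    (htri : ∀ x y z, d x z ≤ d x y + d y z) : Equivalence (NullWith d) where
  refl s := tendsto_const_nhds.congr fun n => (hself _).symm
  symm h := h.congr fun n => hcomm _ _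
  trans {s t u} h₁ h₂ := by
    have hnonneg : ∀ x y, 0 ≤ d x y := fun x y => by linarith [htri x y x, hcomm x y, hself x]
    refine squeeze_zero (fun n => hnonneg _ _) (fun n => htri _ (t.1 n) _) ?_
    simpa using h₁.add h₂

theorem nullWith_of_eventually_eq (hself : ∀ x, d x x = 0)
    {s t : {s : ℕ → X // IsCauchyWith d s}} (h : ∀ᶠ n in atTop, s.1 n = t.1 n) :
    NullWith d s t :=
  tendsto_const_nhds.congr' (h.mono fun n hn => by simp only [hn, hself])

theorem IsCauchyWith.of_le_mul {d' : Y → Y → ℝ} {s : ℕ → X} {t : ℕ → Y} {C : ℝ} (hC : 0 < C)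
    (hs : IsCauchyWith d s) (h : ∀ m n, d' (t m) (t n) ≤ C * d (s m) (s n)) :
    IsCauchyWith d' t := by
  intro ε hε
  obtain ⟨N, hN⟩ := hs (ε / C) (div_pos hε hC)
  exact ⟨N, fun m hm n hn => (h m n).trans_lt ((lt_div_iff₀' hC).1 (hN m hm n hn))⟩

theorem IsCauchyWith.comp_max {s : ℕ → X} (hs : IsCauchyWith d s) (N : ℕ) :
    IsCauchyWith d fun n => s (max n N) := by
  intro ε hε
  obtain ⟨M, hM⟩ := hs ε hε
  exact ⟨M, fun m hm n hn =>
    hM _ (hm.trans (le_max_left _ _)) _ (hn.trans (le_max_left _ _))⟩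

end CauchySequences

theorem EReal.tendsto_sub_coe {α : Type*} {l : Filter α} {f : α → EReal} {L : EReal}
    (h : Tendsto f l (𝓝 L)) (x : ℝ) : Tendsto (fun n => f n - x) l (𝓝 (L - x)) := by
  simp only [sub_eq_add_neg, ← EReal.coe_neg]
  exact (EReal.continuousAt_add (p := (L, ((-x : ℝ) : EReal))) (.inr (EReal.coe_ne_bot _))
    (.inr (EReal.coe_ne_top _))).tendsto.comp (h.prodMk_nhds tendsto_const_nhds)

noncomputable def expNegVal (v : EReal) : ℝ :=
  if v = ⊤ then 0 else Real.exp (-v.toReal)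

theorem vsDist_eq_expNegVal {X : Type*} (v : X → EReal) (sub : X → X → X) (x y : X) :
    vsDist v sub x y = expNegVal (v (sub x y)) :=
  rfl

theorem expNegVal_top : expNegVal ⊤ = 0 :=
  if_pos rfl

theorem expNegVal_coe (v : ℝ) : expNegVal v = Real.exp (-v) :=
  if_neg (EReal.coe_ne_top v)

theorem expNegVal_nonneg (v : EReal) : 0 ≤ expNegVal v := by
  unfold expNegVal; split_ifs <;> positivity

theorem expNegVal_le_of_le {v w : EReal} (hv : v ≠ ⊥) (h : v ≤ w) : expNegVal w ≤ expNegVal v := by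
  induction v using EReal.rec with
  | bot => exact absurd rfl hv
  | top => rw [top_le_iff.1 h]
  | coe v =>
    induction w using EReal.rec with
    | bot => exact absurd (le_bot_iff.1 h) (EReal.coe_ne_bot v)
    | top => rw [expNegVal_top]; exact expNegVal_nonneg _
    | coe w => simpa [expNegVal_coe] using EReal.coe_le_coe_iff.1 h

theorem expNegVal_lt_exp_neg_iff {v : EReal} (hv : v ≠ ⊥) (k : ℝ) :
    expNegVal v < Real.exp (-k) ↔ (k : EReal) < v := by
  induction v using EReal.rec with
  | bot => exact absurd rfl hv
  | top => simp [expNegVal_top, Real.exp_pos]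
  | coe v => simp [expNegVal_coe]

theorem expNegVal_sub_coe {v : EReal} (hv : v ≠ ⊥) (x : ℝ) :
    expNegVal (v - x) = Real.exp x * expNegVal v := by
  induction v using EReal.rec with
  | bot => exact absurd rfl hv
  | top => simp [expNegVal_top]
  | coe v => rw [← EReal.coe_sub, expNegVal_coe, expNegVal_coe, ← Real.exp_add]; ring_nf

structure IsNonarchimedeanFiltration {A : Type*} [AddGroup A] (ρ : A → EReal) : Prop where
  ne_bot : ∀ a, ρ a ≠ ⊥
  map_zero : ρ 0 = ⊤
  map_neg : ∀ a, ρ (-a) = ρ a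
  min_le_map_add : ∀ a b, min (ρ a) (ρ b) ≤ ρ (a + b)

namespace IsNonarchimedeanFiltration

variable {A : Type*} [AddCommGroup A] {ρ : A → EReal} (hρ : IsNonarchimedeanFiltration ρ)
include hρ

theorem min_le_map_sub (a b : A) : min (ρ a) (ρ b) ≤ ρ (a - b) := by
  simpa only [sub_eq_add_neg, hρ.map_neg] using hρ.min_le_map_add a (-b)

theorem map_sub_comm (a b : A) : ρ (a - b) = ρ (b - a) := by
  rw [← neg_sub, hρ.map_neg]

theorem map_eq_of_lt_map_sub {a b : A} (h : ρ b < ρ (a - b)) : ρ a = ρ b := by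
  have hle : ρ b ≤ ρ a := by
    simpa [min_eq_right h.le] using hρ.min_le_map_add (a - b) b
  refine le_antisymm (not_lt.1 fun hlt => ?_) hle
  have := hρ.min_le_map_sub a (a - b)
  rw [sub_sub_cancel] at this
  exact this.not_gt (lt_min hlt h)

theorem vsDist_self (a : A) : vsDist ρ (fun x y => x - y) a a = 0 := by
  rw [vsDist_eq_expNegVal, sub_self, hρ.map_zero, expNegVal_top]

theorem vsDist_comm (a b : A) :
    vsDist ρ (fun x y => x - y) a b = vsDist ρ (fun x y => x - y) b a := by
  rw [vsDist_eq_expNegVal, vsDist_eq_expNegVal, hρ.map_sub_comm]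

theorem vsDist_le_max (a b c : A) :
    vsDist ρ (fun x y => x - y) a c ≤
      max (vsDist ρ (fun x y => x - y) a b) (vsDist ρ (fun x y => x - y) b c) := by
  simp only [vsDist_eq_expNegVal]
  have hmin := hρ.min_le_map_add (a - b) (b - c)
  rw [sub_add_sub_cancel] at hmin
  rcases min_choice (ρ (a - b)) (ρ (b - c)) with h | h <;> rw [h] at hmin
  · exact (expNegVal_le_of_le (hρ.ne_bot _) hmin).trans (le_max_left _ _)
  · exact (expNegVal_le_of_le (hρ.ne_bot _) hmin).trans (le_max_right _ _)

theorem vsDist_triangle (a b c : A) :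
    vsDist ρ (fun x y => x - y) a c ≤
      vsDist ρ (fun x y => x - y) a b + vsDist ρ (fun x y => x - y) b c :=
  (hρ.vsDist_le_max a b c).trans
    (max_le_add_of_nonneg (expNegVal_nonneg _) (expNegVal_nonneg _))

theorem exists_tendsto_of_isCauchyWith {s : ℕ → A}
    (hs : IsCauchyWith (vsDist ρ fun x y => x - y) s) :
    ∃ L, Tendsto (fun n => ρ (s n)) atTop (𝓝 L) := by
  by_cases hdiv : ∀ k : ℝ, ∀ᶠ n in atTop, (k : EReal) < ρ (s n)
  · exact ⟨⊤, EReal.tendsto_nhds_top_iff_real.2 hdiv⟩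
  push Not at hdiv
  obtain ⟨k, hk⟩ := hdiv
  obtain ⟨N, hN⟩ := hs (Real.exp (-k)) (Real.exp_pos _)
  obtain ⟨n₀, hn₀N, hn₀k⟩ := (frequently_atTop.1 hk) N
  refine ⟨ρ (s n₀), tendsto_const_nhds.congr' (eventually_atTop.2 ⟨N, fun m hm => ?_⟩)⟩
  have hclose : (k : EReal) < ρ (s m - s n₀) :=
    (expNegVal_lt_exp_neg_iff (hρ.ne_bot _) k).1 (hN m hm n₀ hn₀N)
  exact (hρ.map_eq_of_lt_map_sub (hn₀k.trans_lt hclose)).symm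

end IsNonarchimedeanFiltration

section NovikovFiltration

variable {R : Type*} [CommRing R] {T : ℝ≥0 → R} {A : Type*} [AddCommGroup A] [Module R A]
  {ρ : A → EReal}
  (hρ : ∀ a : A,
    ρ a = sSup {x : EReal | ∃ r : ℝ≥0, x = ((r : ℝ) : EReal) ∧ ∃ c : A, a = T r • c})
include hρ

theorem le_of_eq_smul {a c : A} {r : ℝ≥0} (h : a = T r • c) : ((r : ℝ) : EReal) ≤ ρ a :=
  (hρ a).symm ▸ le_sSup ⟨r, rfl, c, h⟩

theorem exists_eq_smul_of_lt (hTadd : ∀ r s : ℝ≥0, T (r + s) = T r * T s) {a : A} {r : ℝ≥0}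
    (h : ((r : ℝ) : EReal) < ρ a) : ∃ c, a = T r • c := by
  rw [hρ] at h
  obtain ⟨_, ⟨r₁, rfl, c, rfl⟩, hr₁⟩ := lt_sSup_iff.1 h
  have hrr₁ : r ≤ r₁ := by exact_mod_cast hr₁.le
  exact ⟨T (r₁ - r) • c, by rw [smul_smul, ← hTadd, add_tsub_cancel_of_le hrr₁]⟩

theorem isNonarchimedeanFiltration (h0 : T 0 = 1)
    (hTadd : ∀ r s : ℝ≥0, T (r + s) = T r * T s) : IsNonarchimedeanFiltration ρ := by
  have hnonneg (a : A) : (0 : EReal) ≤ ρ a := by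
    simpa using le_of_eq_smul hρ (r := 0) (c := a) (by rw [h0, one_smul])
  refine ⟨fun a => ne_bot_of_le_ne_bot EReal.zero_ne_bot (hnonneg a), ?_, fun a => ?_, ?_⟩
  · refine (hρ 0).trans (sSup_eq_top.2 fun b hb => ?_)
    obtain ⟨y, hby, -⟩ := EReal.exists_between_coe_real hb
    refine ⟨((y.toNNReal + 1 : ℝ≥0) : ℝ), ⟨_, rfl, 0, (smul_zero _).symm⟩, hby.trans ?_⟩
    exact_mod_cast (Real.le_coe_toNNReal y).trans_lt (by push_cast; linarith)
  · rw [hρ, hρ]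
    congr 1; ext x
    refine exists_congr fun r => and_congr_right fun _ =>
      ⟨fun ⟨c, hc⟩ => ⟨-c, by rw [smul_neg, ← hc, neg_neg]⟩,
        fun ⟨c, hc⟩ => ⟨-c, by rw [smul_neg, ← hc]⟩⟩
  · intro a b
    refine le_of_forall_lt fun e he => ?_
    rcases lt_or_ge e 0 with he0 | he0
    · exact he0.trans_le (hnonneg _)
    obtain ⟨y, hey, hy⟩ := EReal.exists_between_coe_real he
    have hy0 : 0 ≤ y := by exact_mod_cast he0.trans hey.le
    obtain ⟨c₁, rfl⟩ := exists_eq_smul_of_lt hρ hTadd (r := y.toNNReal)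
      (by rw [Real.coe_toNNReal _ hy0]; exact hy.trans_le (min_le_left _ _))
    obtain ⟨c₂, rfl⟩ := exists_eq_smul_of_lt hρ hTadd (r := y.toNNReal)
      (by rw [Real.coe_toNNReal _ hy0]; exact hy.trans_le (min_le_right _ _))
    refine hey.trans_le ?_
    simpa [Real.coe_toNNReal _ hy0] using le_of_eq_smul hρ (smul_add (T y.toNNReal) c₁ c₂).symm

end NovikovFiltration

namespace TensQ

section

variable {A : Type*} [AddCommGroup A] {act : ℝ≥0 → A → A} {ρ : A → EReal}
  (hρ : IsNonarchimedeanFiltration ρ) {val : TensQ A act → EReal}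
  (hval : ∀ (a : A) (s : ℝ), val (mk act a s) = ρ a - (s : EReal))
  {sub : TensQ A act → TensQ A act → TensQ A act}
  (hsub : ∀ (a a' : A) (s : ℝ), sub (mk act a s) (mk act a' s) = mk act (a - a') s)

include hρ hval in
theorem val_ne_bot (z : TensQ A act) : val z ≠ ⊥ := by
  obtain ⟨a, x, rfl⟩ := exists_eq_mk z
  rw [hval, sub_eq_add_neg, ← EReal.coe_neg]
  exact EReal.add_ne_bot_iff.2 ⟨hρ.ne_bot a, EReal.coe_ne_bot _⟩

include hρ hval hsub

theorem vsDist_mk_mk (a b : A) (x : ℝ) :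
    vsDist val sub (mk act a x) (mk act b x) =
      Real.exp x * vsDist ρ (fun x y => x - y) a b := by
  rw [vsDist_eq_expNegVal, vsDist_eq_expNegVal, hsub, hval, expNegVal_sub_coe (hρ.ne_bot _)]

theorem vsDist_self (z : TensQ A act) : vsDist val sub z z = 0 := by
  obtain ⟨a, x, rfl⟩ := exists_eq_mk z
  rw [vsDist_mk_mk hρ hval hsub, hρ.vsDist_self, mul_zero]

theorem nullWith_vsDist_equivalence : Equivalence (NullWith (vsDist val sub)) := by
  refine nullWith_equivalence (vsDist_self hρ hval hsub) (fun z w => ?_) (fun z v w => ?_)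
  · obtain ⟨a, b, x, rfl, rfl⟩ := exists_eq_mk_eq_mk z w
    rw [vsDist_mk_mk hρ hval hsub, vsDist_mk_mk hρ hval hsub, hρ.vsDist_comm]
  · obtain ⟨a, b, c, x, rfl, rfl, rfl⟩ := exists_eq_mk_eq_mk_eq_mk z v w
    simp only [vsDist_mk_mk hρ hval hsub, ← mul_add]
    exact mul_le_mul_of_nonneg_left (hρ.vsDist_triangle a b c) (Real.exp_pos x).le

theorem isCauchyWith_mk {s : ℕ → A} (hs : IsCauchyWith (vsDist ρ fun x y => x - y) s) (x : ℝ) :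
    IsCauchyWith (vsDist val sub) fun n => mk act (s n) x :=
  hs.of_le_mul (Real.exp_pos x) fun _ _ => (vsDist_mk_mk hρ hval hsub _ _ x).le

theorem nullWith_of_nullWith_mk {x : ℝ}
    {s t : {s : ℕ → A // IsCauchyWith (vsDist ρ fun x y => x - y) s}}
    (h : NullWith (vsDist val sub) ⟨_, isCauchyWith_mk hρ hval hsub s.2 x⟩
      ⟨_, isCauchyWith_mk hρ hval hsub t.2 x⟩) :
    NullWith (vsDist ρ fun x y => x - y) s t := by
  have := h.const_mul (Real.exp (-x))
  rw [mul_zero] at this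
  refine this.congr fun n => ?_
  rw [vsDist_mk_mk hρ hval hsub, Real.exp_neg, inv_mul_cancel_left₀ (Real.exp_ne_zero x)]

end

section Novikov

variable {R : Type*} [CommRing R] {T : ℝ≥0 → R} {A : Type*} [AddCommGroup A] [Module R A]
  {ρ : A → EReal}
  (hρ : ∀ a : A,
    ρ a = sSup {x : EReal | ∃ r : ℝ≥0, x = ((r : ℝ) : EReal) ∧ ∃ c : A, a = T r • c})
  (hTadd : ∀ r s : ℝ≥0, T (r + s) = T r * T s)
  {val : TensQ A (fun r a => T r • a) → EReal}
  (hval : ∀ (a : A) (s : ℝ), val (mk _ a s) = ρ a - (s : EReal))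
  {sub : TensQ A (fun r a => T r • a) → TensQ A (fun r a => T r • a) →
    TensQ A (fun r a => T r • a)}
  (hsub : ∀ (a a' : A) (s : ℝ), sub (mk _ a s) (mk _ a' s) = mk _ (a - a') s)
include hρ hTadd hval hsub

theorem exists_eq_mk_of_lt_val_sub {z : TensQ A (fun r a => T r • a)} {a : A} {x : ℝ}
    (h : ((-x : ℝ) : EReal) < val (sub z (mk _ a x))) : ∃ b, z = mk _ b x := by
  obtain ⟨s, hs⟩ := z.exists_level
  obtain ⟨p, rfl⟩ := hs (max s x) (le_max_left _ _)
  have hxy : x ≤ max s x := le_max_right _ _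
  have hr : (((max s x - x).toNNReal : ℝ) : EReal) = ((-x : ℝ) : EReal) + max s x := by
    rw [Real.coe_toNNReal _ (sub_nonneg.2 hxy), ← EReal.coe_add, neg_add_eq_sub]
  rw [mk_eq_mk_of_le a hxy, hsub, hval,
    EReal.lt_sub_iff_add_lt (.inl (EReal.coe_ne_bot _)) (.inl (EReal.coe_ne_top _)), ← hr] at h
  obtain ⟨c, hc⟩ := exists_eq_smul_of_lt hρ hTadd h
  refine ⟨a + c, ?_⟩
  rw [mk_eq_mk_of_le (a + c) hxy, smul_add, ← hc, add_sub_cancel]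

theorem exists_isCauchyWith_eventually_eq_mk (h0 : T 0 = 1)
    {u : ℕ → TensQ A (fun r a => T r • a)}
    (hu : IsCauchyWith (vsDist val sub) u) :
    ∃ (x : ℝ) (b : ℕ → A), IsCauchyWith (vsDist ρ fun x y => x - y) b ∧
      ∀ᶠ n in atTop, u n = mk _ (b n) x := by
  have hρ' := isNonarchimedeanFiltration hρ h0 hTadd
  obtain ⟨N, hN⟩ := hu 1 one_pos
  obtain ⟨s, hs⟩ := (u N).exists_level
  obtain ⟨a, ha⟩ := hs (max s 0) (le_max_left _ _)
  have hlevel (n : ℕ) : ∃ b, u (max n N) = mk _ b (max s 0) := by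
    have hd := hN (max n N) (le_max_right _ _) N le_rfl
    rw [vsDist_eq_expNegVal, ← Real.exp_zero, ← neg_zero,
      expNegVal_lt_exp_neg_iff (val_ne_bot hρ' hval _), ha] at hd
    refine exists_eq_mk_of_lt_val_sub hρ hTadd hval hsub (hd.trans_le' ?_)
    exact_mod_cast neg_nonpos.2 (le_max_right s 0)
  choose b hb using hlevel
  refine ⟨max s 0, b, ?_, eventually_atTop.2 ⟨N, fun n hn => by rw [← hb, max_eq_left hn]⟩⟩
  refine (hu.comp_max N).of_le_mul (Real.exp_pos (-max s 0)) fun m n => ?_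
  rw [hb, hb, vsDist_mk_mk hρ' hval hsub, Real.exp_neg,
    inv_mul_cancel_left₀ (Real.exp_ne_zero _)]

end Novikov

end TensQ

theorem statement3_general {R : Type*} [CommRing R]
    (T : ℝ≥0 → R) (h0 : T 0 = 1) (hTadd : ∀ r s : ℝ≥0, T (r + s) = T r * T s)
    {A : Type*} [AddCommGroup A] [Module R A]
    (ρ : A → EReal)
    (hρ : ∀ a : A,
      ρ a = sSup {x : EReal | ∃ r : ℝ≥0, x = ((r : ℝ) : EReal) ∧ ∃ c : A, a = T r • c})
    (valAΛ : TensQ A (fun r a => T r • a) → EReal)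
    (hvalAΛ : ∀ (a : A) (s : ℝ), valAΛ (TensQ.mk _ a s) = ρ a - (s : EReal))
    (subAΛ : TensQ A (fun r a => T r • a) → TensQ A (fun r a => T r • a) →
      TensQ A (fun r a => T r • a))
    (hsubAΛ : ∀ (a a' : A) (s : ℝ),
      subAΛ (TensQ.mk _ a s) (TensQ.mk _ a' s) = TensQ.mk _ (a - a') s)
    (hatSmul : ℝ≥0 → CompletionWith (vsDist ρ fun x y => x - y) →
      CompletionWith (vsDist ρ fun x y => x - y))
    (Φ : TensQ (CompletionWith (vsDist ρ fun x y => x - y)) hatSmul →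
      CompletionWith (vsDist valAΛ subAΛ))
    (hΦ : ∀ (s : {s : ℕ → A // IsCauchyWith (vsDist ρ fun x y => x - y) s}) (x : ℝ)
        (u : {u : ℕ → TensQ A (fun r a => T r • a) //
          IsCauchyWith (vsDist valAΛ subAΛ) u}),
      (∀ n, u.1 n = TensQ.mk _ (s.1 n) x) →
        Φ (TensQ.mk _ (CompletionWith.mk _ s) x) = CompletionWith.mk _ u)
    (valTens : TensQ (CompletionWith (vsDist ρ fun x y => x - y)) hatSmul → EReal)
    (hvalTens : ∀ (s : {s : ℕ → A // IsCauchyWith (vsDist ρ fun x y => x - y) s})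
        (x : ℝ) (L : EReal),
      Filter.Tendsto (fun n => ρ (s.1 n)) Filter.atTop (nhds L) →
        valTens (TensQ.mk _ (CompletionWith.mk _ s) x) = L - (x : EReal))
    (valComp : CompletionWith (vsDist valAΛ subAΛ) → EReal)
    (hvalComp : ∀ (u : {u : ℕ → TensQ A (fun r a => T r • a) //
          IsCauchyWith (vsDist valAΛ subAΛ) u}) (L : EReal),
      Filter.Tendsto (fun n => valAΛ (u.1 n)) Filter.atTop (nhds L) →
        valComp (CompletionWith.mk _ u) = L) :
    Function.Bijective Φ ∧ ∀ z, valComp (Φ z) = valTens z := by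
  have hρ' := isNonarchimedeanFiltration hρ h0 hTadd
  have hΦmk (s : {s : ℕ → A // IsCauchyWith (vsDist ρ fun x y => x - y) s}) (x : ℝ) :
      Φ (TensQ.mk _ (CompletionWith.mk _ s) x) =
        CompletionWith.mk _ ⟨_, TensQ.isCauchyWith_mk hρ' hvalAΛ hsubAΛ s.2 x⟩ :=
    hΦ s x _ fun _ => rfl
  refine ⟨⟨fun z z' h => ?_, fun y => ?_⟩, fun z => ?_⟩
  · obtain ⟨C, C', x, rfl, rfl⟩ := TensQ.exists_eq_mk_eq_mk z z'
    obtain ⟨s, rfl⟩ := CompletionWith.mk_surjective C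
    obtain ⟨s', rfl⟩ := CompletionWith.mk_surjective C'
    rw [hΦmk, hΦmk,
      CompletionWith.mk_eq_mk_iff (TensQ.nullWith_vsDist_equivalence hρ' hvalAΛ hsubAΛ)] at h
    exact congrArg (TensQ.mk hatSmul · x)
      (Quot.sound (TensQ.nullWith_of_nullWith_mk hρ' hvalAΛ hsubAΛ h))
  · obtain ⟨u, rfl⟩ := CompletionWith.mk_surjective y
    obtain ⟨x, b, hb, hbu⟩ :=
      TensQ.exists_isCauchyWith_eventually_eq_mk hρ hTadd hvalAΛ hsubAΛ h0 u.2
    refine ⟨TensQ.mk _ (CompletionWith.mk _ ⟨b, hb⟩) x, ?_⟩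
    rw [hΦmk]
    exact Quot.sound (nullWith_of_eventually_eq (TensQ.vsDist_self hρ' hvalAΛ hsubAΛ)
      (hbu.mono fun n hn => hn.symm))
  · obtain ⟨C, x, rfl⟩ := TensQ.exists_eq_mk z
    obtain ⟨s, rfl⟩ := CompletionWith.mk_surjective C
    obtain ⟨L, hL⟩ := hρ'.exists_tendsto_of_isCauchyWith s.2
    rw [hΦmk, hvalTens s x L hL]
    exact hvalComp _ _ ((EReal.tendsto_sub_coe hL x).congr fun n => (hvalAΛ _ _).symm)

/-- let `A` be a free module over the Novikov ring, with its canonical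
filtration `ρ(a) = sup{r : a ∈ T^r A}` and the induced non-archimedean valuation
`val(a/T^s) = ρ(a) − s` on `A ⊗ Λ`.  Then the natural map `Â ⊗ Λ → (A ⊗ Λ)^` from
the (Cauchy) completion of `A` base changed to the Novikov field to the completion
of the normed space `A ⊗ Λ` is a valuation-preserving isomorphism.  All auxiliary
structure maps (the rescaling action on `Â`, the valuation and difference on
`A ⊗ Λ`, the natural map, and the valuations on the two completions) are
characterized by their defining properties as hypotheses. -/
theorem statement3 {R : Type*} [CommRing R]
    (T : ℝ≥0 → R) (h0 : T 0 = 1) (hTadd : ∀ r s : ℝ≥0, T (r + s) = T r * T s)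
    {A : Type*} [AddCommGroup A] [Module R A]
    {ι : Type*} (bA : Module.Basis ι R A)
    (ρ : A → EReal)
    (hρ : ∀ a : A,
      ρ a = sSup {x : EReal | ∃ r : ℝ≥0, x = ((r : ℝ) : EReal) ∧ ∃ c : A, a = T r • c})
    (valAΛ : TensQ A (fun r a => T r • a) → EReal)
    (hvalAΛ : ∀ (a : A) (s : ℝ), valAΛ (TensQ.mk _ a s) = ρ a - (s : EReal))
    (subAΛ : TensQ A (fun r a => T r • a) → TensQ A (fun r a => T r • a) →
      TensQ A (fun r a => T r • a))
    (hsubAΛ : ∀ (a a' : A) (s : ℝ),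
      subAΛ (TensQ.mk _ a s) (TensQ.mk _ a' s) = TensQ.mk _ (a - a') s)
    (hatSmul : ℝ≥0 → CompletionWith (vsDist ρ fun x y => x - y) →
      CompletionWith (vsDist ρ fun x y => x - y))
    (hhatSmul : ∀ (r : ℝ≥0)
        (s t : {s : ℕ → A // IsCauchyWith (vsDist ρ fun x y => x - y) s}),
      (∀ n, t.1 n = T r • s.1 n) →
        hatSmul r (CompletionWith.mk _ s) = CompletionWith.mk _ t)
    (Φ : TensQ (CompletionWith (vsDist ρ fun x y => x - y)) hatSmul →
      CompletionWith (vsDist valAΛ subAΛ))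
    (hΦ : ∀ (s : {s : ℕ → A // IsCauchyWith (vsDist ρ fun x y => x - y) s}) (x : ℝ)
        (u : {u : ℕ → TensQ A (fun r a => T r • a) //
          IsCauchyWith (vsDist valAΛ subAΛ) u}),
      (∀ n, u.1 n = TensQ.mk _ (s.1 n) x) →
        Φ (TensQ.mk _ (CompletionWith.mk _ s) x) = CompletionWith.mk _ u)
    (valTens : TensQ (CompletionWith (vsDist ρ fun x y => x - y)) hatSmul → EReal)
    (hvalTens : ∀ (s : {s : ℕ → A // IsCauchyWith (vsDist ρ fun x y => x - y) s})
        (x : ℝ) (L : EReal),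
      Filter.Tendsto (fun n => ρ (s.1 n)) Filter.atTop (nhds L) →
        valTens (TensQ.mk _ (CompletionWith.mk _ s) x) = L - (x : EReal))
    (valComp : CompletionWith (vsDist valAΛ subAΛ) → EReal)
    (hvalComp : ∀ (u : {u : ℕ → TensQ A (fun r a => T r • a) //
          IsCauchyWith (vsDist valAΛ subAΛ) u}) (L : EReal),
      Filter.Tendsto (fun n => valAΛ (u.1 n)) Filter.atTop (nhds L) →
        valComp (CompletionWith.mk _ u) = L) :
    Function.Bijective Φ ∧ ∀ z, valComp (Φ z) = valTens z :=
  statement3_general T h0 hTadd ρ hρ valAΛ hvalAΛ subAΛ hsubAΛ hatSmul Φ hΦ valTens hvalTens valComp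
    hvalComp
end

section
/- Let 𝕜 be a non-archimedean valued field with valuation val. For a formal Laurent series f = Σ_{j ∈ (ℤⁿ)^∨} a_j x^j with coefficients in 𝕜, say f converges at m ∈ ℝⁿ if for every R ∈ ℝ there are only finitely many j with val(a_j) + j(m) < R. If f converges at two points m₀, m₁ ∈ ℝⁿ, then f converges at t·m₁ + (1−t)·m₀ for every t ∈ [0,1]. -/
/-- A formal Laurent series with coefficients `a : (ℤⁿ)^∨ → 𝕜` converges at a point
`m ∈ ℝⁿ` if for every `R ∈ ℝ` there are only finitely many exponents `j` with
`val (a j) + j(m) < R`. -/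
def LaurentConvergesAt {𝕜 : Type*} {n : ℕ} (val : 𝕜 → EReal)
    (a : (Fin n → ℤ) → 𝕜) (m : Fin n → ℝ) : Prop :=
  ∀ R : ℝ,
    {j : Fin n → ℤ | val (a j) + ((∑ i, (j i : ℝ) * m i : ℝ) : EReal) < (R : EReal)}.Finite

/-! For a fixed exponent `j`, the quantity `val (a j) + j(m)` is affine in `m`, so along the
segment from `m₀` to `m₁` it is bounded below by its value at one of the endpoints. Hence the
exceptional set at a point of the segment lies in the union of the two finite exceptional sets
at `m₀` and `m₁`. -/

lemma sum_int_mul_combo {ι : Type*} [Fintype ι] (j : ι → ℤ) (m₀ m₁ : ι → ℝ) (t : ℝ) :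
    ∑ i, (j i : ℝ) * (t • m₁ + (1 - t) • m₀) i =
      t * ∑ i, (j i : ℝ) * m₁ i + (1 - t) * ∑ i, (j i : ℝ) * m₀ i := by
  simp only [Pi.add_apply, Pi.smul_apply, smul_eq_mul, mul_add, Finset.sum_add_distrib,
    Finset.mul_sum]
  congr 1 <;> exact Finset.sum_congr rfl fun i _ => by ring

lemma EReal.add_coe_lt_or_of_add_combo_lt {v : EReal} {x y t R : ℝ} (ht : t ∈ Set.Icc 0 1)
    (h : v + ((t * y + (1 - t) * x : ℝ) : EReal) < R) : v + x < R ∨ v + y < R := by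
  have hmin : min x y ≤ t * y + (1 - t) * x := by
    simpa [add_comm] using Convex.min_le_combo x y (_root_.sub_nonneg.2 ht.2) ht.1 (by ring)
  have hle : min (v + x) (v + y) ≤ v + ((t * y + (1 - t) * x : ℝ) : EReal) := by
    rw [min_add_add_left, ← EReal.coe_strictMono.monotone.map_min]
    gcongr
  exact min_lt_iff.1 (hle.trans_lt h)

theorem statement8_general {𝕜 : Type*} {n : ℕ} (val : 𝕜 → EReal)
    (a : (Fin n → ℤ) → 𝕜) (m₀ m₁ : Fin n → ℝ)
    (h₀ : LaurentConvergesAt val a m₀) (h₁ : LaurentConvergesAt val a m₁) :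
    ∀ t : ℝ, t ∈ Set.Icc (0 : ℝ) 1 →
      LaurentConvergesAt val a (t • m₁ + (1 - t) • m₀) := by
  intro t ht R
  refine ((h₀ R).union (h₁ R)).subset fun j hj => ?_
  rw [Set.mem_ofPred_eq, sum_int_mul_combo] at hj
  exact EReal.add_coe_lt_or_of_add_combo_lt ht hj

/-- the convergence domain of a formal Laurent series over a
non-archimedean valued field is convex: if the series converges at `m₀` and `m₁`,
then it converges at `t•m₁ + (1−t)•m₀` for every `t ∈ [0,1]`. -/
theorem statement8 {𝕜 : Type*} [Field 𝕜] {n : ℕ} (val : 𝕜 → EReal)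
    (hval0 : val 0 = ⊤)
    (a : (Fin n → ℤ) → 𝕜) (m₀ m₁ : Fin n → ℝ)
    (h₀ : LaurentConvergesAt val a m₀) (h₁ : LaurentConvergesAt val a m₁) :
    ∀ t : ℝ, t ∈ Set.Icc (0 : ℝ) 1 →
      LaurentConvergesAt val a (t • m₁ + (1 - t) • m₀) :=
  statement8_general val a m₀ m₁ h₀ h₁
end

section
/- Consider the graded algebra of algebraic polyvector fields T* on the torus (𝕜*)ⁿ and the logarithmic volume form Ω₀ = (dy₁/y₁)∧⋯∧(dyₙ/yₙ). Define div_{Ω₀}(ω) = (−1)^{|ω|} ι_{Ω₀} ∘ d ∘ ι_{Ω₀}^{-1}(ω), where ι_{Ω₀}: T^* → Ω^{n−*} is the contraction isomorphism. Then for a monomial polyvector field z^{−α} y^{e_{j(1)}^∨+⋯+e_{j(k)}^∨} ∂/∂y_{j(1)} ⋯ ∂/∂y_{j(k)} corresponding under the natural map to z^α ⊗ e_{j(1)}∧⋯∧e_{j(k)}, the operator div_{Ω₀} acts as Δ(z^α ⊗ β) = z^α ⊗ ι_α β; i.e. the map 𝒜* → T* sending z^{e_i^∨}⊗1 ↦ y_i^{-1}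 and 1⊗e_j ↦ y_j ∂/∂y_j intertwines Δ with div_{Ω₀}. -/
/-!
Write `e_S` for the wedge, in increasing order, of the basis vectors indexed by `S`. The
contraction `Ψ` sends `y^β e_S` to `±y^β e_{Sᶜ}`; the differential wedges `∑ β_m e_m` on the
left, which kills the terms with `m ∉ S` and gives `±β_m y^β e_{Sᶜ ∪ {m}}` for `m ∈ S`; and
`Ψ⁻¹` returns `±β_m y^β e_{S ∖ {m}}`. The contraction `ι_{-β} e_S` is a combination of the same
`e_{S ∖ {m}}` with coefficients `∓β_m`, so the theorem (at `β = -α`) comes down to comparing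
parities built from `#{s ∈ S | s < m}`, `∑ S` and `#S`.
-/

open scoped TensorProduct

noncomputable section

variable (𝕜 : Type*) [Field 𝕜] (n : ℕ)

/-- The linear functional on `𝕜ⁿ` determined by `α ∈ (ℤⁿ)^∨`. -/
def dualFunctional (α : Fin n → ℤ) : Module.Dual 𝕜 (Fin n → 𝕜) :=
  ∑ i : Fin n, (α i : 𝕜) • LinearMap.proj i

/-- The common underlying space of polyvector fields `T*` (with generators
`y_j ∂/∂y_j`) and logarithmic differential forms `Ω*` (with generators `dy_j/y_j`)
on the algebraic torus `(𝕜*)ⁿ`: Laurent polynomials tensored with the exterior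
algebra. -/
abbrev torusPolyvector : Type _ :=
  AddMonoidAlgebra 𝕜 (Fin n → ℤ) ⊗[𝕜] ExteriorAlgebra 𝕜 (Fin n → 𝕜)

/-- The monomial `y^β ⊗ ω`. -/
def tpMonomial (β : Fin n → ℤ) (ω : ExteriorAlgebra 𝕜 (Fin n → 𝕜)) :
    torusPolyvector 𝕜 n :=
  AddMonoidAlgebra.single β (1 : 𝕜) ⊗ₜ[𝕜] ω

/-- The wedge monomial `e_{j(1)} ∧ ⋯ ∧ e_{j(k)}` in the exterior algebra. -/
def wedgeMonomial {k : ℕ} (j : Fin k → Fin n) : ExteriorAlgebra 𝕜 (Fin n → 𝕜) :=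
  (List.ofFn fun l => ExteriorAlgebra.ι 𝕜 (Pi.single (j l) (1 : 𝕜))).prod

/-- The sign exponent `s(j) = ∑ (j(l) − l)` of a strictly monotone `j`. -/
def wedgeSign {k : ℕ} (j : Fin k → Fin n) : ℕ :=
  ∑ l : Fin k, ((j l : ℕ) - (l : ℕ))

namespace ExteriorAlgebra

variable (R : Type*) {M I : Type*} [CommRing R] [AddCommGroup M] [Module R M] [LinearOrder I]

def finsetWedge (v : I → M) (S : Finset I) : ExteriorAlgebra R M :=
  ((S.sort (· ≤ ·)).map fun i => ι R (v i)).prod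

variable {R} (v : I → M)

@[simp]
lemma finsetWedge_empty : finsetWedge R v ∅ = 1 := by
  simp [finsetWedge]

lemma finsetWedge_insert_of_forall_lt {a : I} {s : Finset I} (h : ∀ x ∈ s, a < x) :
    finsetWedge R v (insert a s) = ι R (v a) * finsetWedge R v s := by
  rw [finsetWedge, Finset.sort_insert _ (fun x hx => (h x hx).le) fun ha => lt_irrefl a (h a ha)]
  rfl

@[simp]
lemma finsetWedge_singleton (a : I) : finsetWedge R v {a} = ι R (v a) := by
  simp [finsetWedge]

lemma ι_mul_ι_eq_neg (x y : M) : ι R x * ι R y = -(ι R y * ι R x) :=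
  eq_neg_of_add_eq_zero_left (ι_add_mul_swap x y)

lemma ι_mul_finsetWedge_of_mem {m : I} {S : Finset I} (hm : m ∈ S) :
    ι R (v m) * finsetWedge R v S = 0 := by
  induction S using Finset.induction_on_min with
  | empty => simp at hm
  | insert a s ha ih =>
    rw [finsetWedge_insert_of_forall_lt v ha, ← mul_assoc]
    rcases Finset.mem_insert.mp hm with rfl | hms
    · rw [ι_sq_zero, zero_mul]
    · rw [ι_mul_ι_eq_neg, neg_mul, mul_assoc, ih hms, mul_zero, neg_zero]

lemma ι_mul_finsetWedge_of_notMem {m : I} {S : Finset I} (hm : m ∉ S) :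
    ι R (v m) * finsetWedge R v S =
      (-1 : R) ^ (S.filter (· < m)).card • finsetWedge R v (insert m S) := by
  induction S using Finset.induction_on_min with
  | empty => simp
  | insert a s ha ih =>
    obtain ⟨hma, hms⟩ : m ≠ a ∧ m ∉ s := by simpa using hm
    rcases hma.lt_or_gt with hlt | hgt
    · have hmin : ∀ x ∈ insert a s, m < x := by
        simpa [hlt] using fun x hx => hlt.trans (ha x hx)
      rw [finsetWedge_insert_of_forall_lt v hmin, Finset.filter_false_of_mem
        fun x hx => (hmin x hx).not_gt, Finset.card_empty, pow_zero, one_smul]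
    · have hmin : ∀ x ∈ insert m s, a < x := by simpa [hgt] using ha
      rw [finsetWedge_insert_of_forall_lt v ha, ← mul_assoc, ι_mul_ι_eq_neg, neg_mul, mul_assoc,
        ih hms, mul_smul_comm, ← finsetWedge_insert_of_forall_lt v hmin, Finset.insert_comm,
        Finset.filter_insert, if_pos hgt,
        Finset.card_insert_of_notMem fun h => lt_irrefl a (ha a (Finset.mem_filter.mp h).1),
        pow_succ, mul_neg_one, neg_smul]

lemma contractLeft_finsetWedge (f : Module.Dual R M) (S : Finset I) :
    CliffordAlgebra.contractLeft f (finsetWedge R v S) =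
      ∑ m ∈ S, ((-1 : R) ^ (S.filter (· < m)).card * f (v m)) • finsetWedge R v (S.erase m) := by
  induction S using Finset.induction_on_min with
  | empty => simp
  | insert a s ha ih =>
    have has : a ∉ s := fun h => lt_irrefl a (ha a h)
    have hmin : ∀ x ∈ insert a s, ¬x < a := by simpa using fun x hx => (ha x hx).le
    rw [finsetWedge_insert_of_forall_lt v ha, CliffordAlgebra.contractLeft_ι_mul, ih,
      Finset.mul_sum, Finset.sum_insert has, Finset.erase_insert has,
      Finset.filter_false_of_mem hmin, Finset.card_empty, pow_zero, one_mul, sub_eq_add_neg,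
      ← Finset.sum_neg_distrib]
    congr 1
    refine Finset.sum_congr rfl fun m hm => ?_
    have ham : a < m := ha m hm
    rw [mul_smul_comm,
      ← finsetWedge_insert_of_forall_lt v fun x hx => ha x (Finset.mem_of_mem_erase hx),
      Finset.erase_insert_of_ne ham.ne, Finset.filter_insert, if_pos ham,
      Finset.card_insert_of_notMem fun h => has (Finset.mem_filter.mp h).1, pow_succ, ← neg_smul]
    congr 1
    ring

end ExteriorAlgebra

open ExteriorAlgebra TensorProduct

section

variable {n}

lemma Fin.val_le_of_strictMono {k : ℕ} {j : Fin k → Fin n} (hj : StrictMono j) (l : Fin k) :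
    (l : ℕ) ≤ j l := by
  simpa using Finset.card_le_card_of_injOn j (s := Finset.Iio l) (t := Finset.Iio (j l))
    (fun x hx => by simpa using hj (by simpa using hx)) hj.injective.injOn

lemma Finset.card_filter_lt_add_card_compl_filter_lt (S : Finset (Fin n)) (m : Fin n) :
    (S.filter (· < m)).card + (Sᶜ.filter (· < m)).card = m := by
  rw [← Finset.card_union_of_disjoint (Finset.disjoint_filter_filter disjoint_compl_right),
    ← Finset.filter_union, Finset.union_compl, ← Fin.card_Iio m]
  congr 1
  ext
  simp

def basisWedge (S : Finset (Fin n)) : ExteriorAlgebra 𝕜 (Fin n → 𝕜) :=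
  finsetWedge 𝕜 (fun m => Pi.single m 1) S

variable {𝕜}

lemma wedgeMonomial_orderEmbOfFin (S : Finset (Fin n)) {k : ℕ} (h : S.card = k) :
    wedgeMonomial 𝕜 n (S.orderEmbOfFin h) = basisWedge 𝕜 S := by
  rw [wedgeMonomial, basisWedge, finsetWedge, ← Finset.listMap_orderEmbOfFin_finRange S h,
    List.map_map, List.ofFn_eq_map]
  rfl

lemma wedgeSign_orderEmbOfFin (S : Finset (Fin n)) {k : ℕ} (h : S.card = k) :
    wedgeSign n (S.orderEmbOfFin h) + ∑ i ∈ Finset.range k, i = ∑ x ∈ S, (x : ℕ) := by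
  set j := S.orderEmbOfFin h
  rw [wedgeSign, ← Fin.sum_univ_eq_sum_range, ← Finset.sum_add_distrib]
  conv_rhs => rw [← Finset.image_orderEmbOfFin_univ S h]
  rw [Finset.sum_image fun _ _ _ _ hxy => j.injective hxy]
  exact Finset.sum_congr rfl fun l _ => Nat.sub_add_cancel (Fin.val_le_of_strictMono j.strictMono l)

lemma dualFunctional_apply_single (α : Fin n → ℤ) (m : Fin n) :
    dualFunctional 𝕜 n α (Pi.single m 1) = α m := by
  simp [dualFunctional, Pi.single_apply]

lemma dualFunctional_neg (α : Fin n → ℤ) : dualFunctional 𝕜 n (-α) = -dualFunctional 𝕜 n α := by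
  ext
  simp [dualFunctional]

def IsLogVolumeContraction (Ψ : torusPolyvector 𝕜 n ≃ₗ[𝕜] torusPolyvector 𝕜 n) : Prop :=
  ∀ (fc : AddMonoidAlgebra 𝕜 (Fin n → ℤ)) (k : ℕ) (j : Fin k → Fin n) (j' : Fin (n - k) → Fin n),
    StrictMono j → StrictMono j' → Set.range j' = (Set.range j)ᶜ →
    Ψ (fc ⊗ₜ[𝕜] wedgeMonomial 𝕜 n j) = ((-1 : 𝕜) ^ wedgeSign n j) • (fc ⊗ₜ[𝕜] wedgeMonomial 𝕜 n j')

def IsLogDeRham (D : torusPolyvector 𝕜 n →ₗ[𝕜] torusPolyvector 𝕜 n) : Prop :=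
  ∀ (β : Fin n → ℤ) (ω : ExteriorAlgebra 𝕜 (Fin n → 𝕜)),
    D (tpMonomial 𝕜 n β ω) =
      ∑ j : Fin n, (β j : 𝕜) •
        (AddMonoidAlgebra.single β (1 : 𝕜) ⊗ₜ[𝕜] (ExteriorAlgebra.ι 𝕜 (Pi.single j (1 : 𝕜)) * ω))

variable {Ψ : torusPolyvector 𝕜 n ≃ₗ[𝕜] torusPolyvector 𝕜 n}
  {D : torusPolyvector 𝕜 n →ₗ[𝕜] torusPolyvector 𝕜 n}

-- `∑ l, (j l - l)` has the parity of `∑ l, j l + ∑ l, l`.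
lemma IsLogVolumeContraction.apply_tmul_basisWedge (hΨ : IsLogVolumeContraction Ψ)
    (fc : AddMonoidAlgebra 𝕜 (Fin n → ℤ)) (S : Finset (Fin n)) :
    Ψ (fc ⊗ₜ basisWedge 𝕜 S) =
      (-1 : 𝕜) ^ (∑ x ∈ S, (x : ℕ) + ∑ i ∈ Finset.range S.card, i) • (fc ⊗ₜ basisWedge 𝕜 Sᶜ) := by
  have hc : Sᶜ.card = n - S.card := by simp [Finset.card_compl]
  have hS := hΨ fc _ (S.orderEmbOfFin rfl) (Sᶜ.orderEmbOfFin hc)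
    (S.orderEmbOfFin rfl).strictMono (Sᶜ.orderEmbOfFin hc).strictMono
    (by rw [Finset.range_orderEmbOfFin, Finset.range_orderEmbOfFin, Finset.coe_compl])
  rw [wedgeMonomial_orderEmbOfFin, wedgeMonomial_orderEmbOfFin] at hS
  have hsign := wedgeSign_orderEmbOfFin S (rfl : S.card = S.card)
  rw [hS]
  congr 1
  exact neg_one_pow_congr (by simp only [Nat.even_iff]; omega)

lemma IsLogVolumeContraction.symm_apply_tmul_basisWedge (hΨ : IsLogVolumeContraction Ψ)
    (fc : AddMonoidAlgebra 𝕜 (Fin n → ℤ)) (T : Finset (Fin n)) :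
    Ψ.symm (fc ⊗ₜ basisWedge 𝕜 T) =
      (-1 : 𝕜) ^ (∑ x ∈ Tᶜ, (x : ℕ) + ∑ i ∈ Finset.range Tᶜ.card, i) • (fc ⊗ₜ basisWedge 𝕜 Tᶜ) := by
  rw [LinearEquiv.symm_apply_eq, map_smul, hΨ.apply_tmul_basisWedge, compl_compl, smul_smul,
    ← pow_add, Even.neg_one_pow ⟨_, rfl⟩, one_smul]

lemma IsLogDeRham.apply_tpMonomial_basisWedge (hD : IsLogDeRham D) (β : Fin n → ℤ)
    (T : Finset (Fin n)) :
    D (tpMonomial 𝕜 n β (basisWedge 𝕜 T)) =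
      ∑ m ∈ Tᶜ, ((-1 : 𝕜) ^ (T.filter (· < m)).card * β m) •
        tpMonomial 𝕜 n β (basisWedge 𝕜 (insert m T)) := by
  rw [hD, ← Finset.sum_add_sum_compl T, basisWedge, Finset.sum_eq_zero fun m hm => by
    rw [ι_mul_finsetWedge_of_mem (fun m => Pi.single m (1 : 𝕜)) hm, tmul_zero, smul_zero], zero_add]
  refine Finset.sum_congr rfl fun m hm => ?_
  rw [ι_mul_finsetWedge_of_notMem (fun m => Pi.single m (1 : 𝕜)) (Finset.mem_compl.mp hm),
    tmul_smul, smul_smul, mul_comm]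
  rfl

lemma divergence_tpMonomial_basisWedge (hD : IsLogDeRham D) (hΨ : IsLogVolumeContraction Ψ)
    (β : Fin n → ℤ) (S : Finset (Fin n)) :
    (-1 : 𝕜) ^ S.card • Ψ.symm (D (Ψ (tpMonomial 𝕜 n β (basisWedge 𝕜 S)))) =
      tpMonomial 𝕜 n β (CliffordAlgebra.contractLeft (-dualFunctional 𝕜 n β) (basisWedge 𝕜 S)) := by
  rw [tpMonomial, hΨ.apply_tmul_basisWedge, map_smul, ← tpMonomial,
    hD.apply_tpMonomial_basisWedge, compl_compl, map_smul, map_sum, Finset.smul_sum,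
    Finset.smul_sum, basisWedge, contractLeft_finsetWedge, tpMonomial, tmul_sum]
  refine Finset.sum_congr rfl fun m hm => ?_
  rw [map_smul, tpMonomial, hΨ.symm_apply_tmul_basisWedge, Finset.compl_insert, compl_compl,
    smul_smul, smul_smul, smul_smul, LinearMap.neg_apply, dualFunctional_apply_single, basisWedge,
    tmul_smul]
  congr 1
  have hsign : (-1 : 𝕜) ^ (S.card + (∑ x ∈ S, (x : ℕ) + ∑ i ∈ Finset.range S.card, i) +
      (Sᶜ.filter (· < m)).card +
      (∑ x ∈ S.erase m, (x : ℕ) + ∑ i ∈ Finset.range (S.erase m).card, i)) =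
      (-1) ^ ((S.filter (· < m)).card + 1) := by
    have hcount := Finset.card_filter_lt_add_card_compl_filter_lt S m
    have hsum := Finset.sum_erase_add S (fun x => (x : ℕ)) hm
    have hcard := Finset.card_erase_add_one hm
    have htri : ∑ i ∈ Finset.range S.card, i =
        ∑ i ∈ Finset.range (S.erase m).card, i + (S.erase m).card := by
      rw [← hcard, Finset.sum_range_succ]
    exact neg_one_pow_congr (by simp only [Nat.even_iff]; omega)
  linear_combination (β m : 𝕜) * hsign

end

theorem statement15_general {𝕜 : Type*} [Field 𝕜] {n : ℕ}
    -- the de Rham differential in logarithmic coordinates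
    (D : torusPolyvector 𝕜 n →ₗ[𝕜] torusPolyvector 𝕜 n)
    (hD : ∀ (β : Fin n → ℤ) (ω : ExteriorAlgebra 𝕜 (Fin n → 𝕜)),
      D (tpMonomial 𝕜 n β ω) =
        ∑ j : Fin n, (β j : 𝕜) •
          (AddMonoidAlgebra.single β (1 : 𝕜) ⊗ₜ[𝕜]
            (ExteriorAlgebra.ι 𝕜 (Pi.single j (1 : 𝕜)) * ω)))
    -- the contraction against the logarithmic volume form `Ω₀`
    (Ψ : torusPolyvector 𝕜 n ≃ₗ[𝕜] torusPolyvector 𝕜 n)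
    (hΨ : ∀ (fc : AddMonoidAlgebra 𝕜 (Fin n → ℤ)) (k : ℕ)
        (j : Fin k → Fin n) (j' : Fin (n - k) → Fin n),
      StrictMono j → StrictMono j' → Set.range j' = (Set.range j)ᶜ →
      Ψ (fc ⊗ₜ[𝕜] wedgeMonomial 𝕜 n j) =
        ((-1 : 𝕜) ^ wedgeSign n j) • (fc ⊗ₜ[𝕜] wedgeMonomial 𝕜 n j')) :
    -- the divergence `(−1)^k Ψ⁻¹ ∘ D ∘ Ψ` acts on the image of `z^α ⊗ e_J` as `Δ`
    ∀ (α : Fin n → ℤ) (k : ℕ) (j : Fin k → Fin n), StrictMono j →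
      ((-1 : 𝕜) ^ k) • (Ψ.symm (D (Ψ (tpMonomial 𝕜 n (-α) (wedgeMonomial 𝕜 n j))))) =
        tpMonomial 𝕜 n (-α)
          (CliffordAlgebra.contractLeft (dualFunctional 𝕜 n α) (wedgeMonomial 𝕜 n j)) := by
  intro α k j hj
  set S := Finset.univ.image j
  have hk : S.card = k := by
    rw [Finset.card_image_of_injective _ hj.injective, Finset.card_univ, Fintype.card_fin]
  have hjS : j = S.orderEmbOfFin hk :=
    Finset.orderEmbOfFin_unique hk (fun l => Finset.mem_image_of_mem j (Finset.mem_univ l)) hj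
  rw [hjS, wedgeMonomial_orderEmbOfFin, ← hk, divergence_tpMonomial_basisWedge hD hΨ,
    dualFunctional_neg, neg_neg]

/-- the logarithmic volume form `Ω₀ = (dy₁/y₁)∧⋯∧(dyₙ/yₙ)` induces a
contraction isomorphism `ι_{Ω₀}` between polyvector fields and differential forms on
the torus, characterized on monomials by `y^γ (y∂)_J ↦ (−1)^{s(J)} y^γ (dlog y)_{Jᶜ}`,
and the divergence operator `div_{Ω₀}(ω) = (−1)^{|ω|} ι_{Ω₀} ∘ d ∘ ι_{Ω₀}⁻¹ (ω)`
(where `d` is the de Rham differential, in logarithmic coordinates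
`d(y^β ω) = ∑ β_j y^β (dy_j/y_j) ∧ ω`) corresponds, under the natural map
`𝒜* → T*` sending `z^{e_i^∨} ⊗ 1 ↦ y_i⁻¹` and `1 ⊗ e_j ↦ y_j ∂/∂y_j` (so
`z^α ⊗ e_J ↦ y^{−α} ⊗ (y∂)_J`), to the BV operator `Δ(z^α ⊗ β) = z^α ⊗ ι_α β`. -/
theorem statement15 {𝕜 : Type*} [Field 𝕜] [CharZero 𝕜] {n : ℕ}
    -- the de Rham differential in logarithmic coordinates
    (D : torusPolyvector 𝕜 n →ₗ[𝕜] torusPolyvector 𝕜 n)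
    (hD : ∀ (β : Fin n → ℤ) (ω : ExteriorAlgebra 𝕜 (Fin n → 𝕜)),
      D (tpMonomial 𝕜 n β ω) =
        ∑ j : Fin n, (β j : 𝕜) •
          (AddMonoidAlgebra.single β (1 : 𝕜) ⊗ₜ[𝕜]
            (ExteriorAlgebra.ι 𝕜 (Pi.single j (1 : 𝕜)) * ω)))
    -- the contraction against the logarithmic volume form `Ω₀`
    (Ψ : torusPolyvector 𝕜 n ≃ₗ[𝕜] torusPolyvector 𝕜 n)
    (hΨ : ∀ (fc : AddMonoidAlgebra 𝕜 (Fin n → ℤ)) (k : ℕ)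
        (j : Fin k → Fin n) (j' : Fin (n - k) → Fin n),
      StrictMono j → StrictMono j' → Set.range j' = (Set.range j)ᶜ →
      Ψ (fc ⊗ₜ[𝕜] wedgeMonomial 𝕜 n j) =
        ((-1 : 𝕜) ^ wedgeSign n j) • (fc ⊗ₜ[𝕜] wedgeMonomial 𝕜 n j')) :
    -- the divergence `(−1)^k Ψ⁻¹ ∘ D ∘ Ψ` acts on the image of `z^α ⊗ e_J` as `Δ`
    ∀ (α : Fin n → ℤ) (k : ℕ) (j : Fin k → Fin n), StrictMono j →
      ((-1 : 𝕜) ^ k) • (Ψ.symm (D (Ψ (tpMonomial 𝕜 n (-α) (wedgeMonomial 𝕜 n j))))) =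
        tpMonomial 𝕜 n (-α)
          (CliffordAlgebra.contractLeft (dualFunctional 𝕜 n α) (wedgeMonomial 𝕜 n j)) :=
  statement15_general D hD Ψ hΨ
end
end
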